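/- arXiv:1605.05274 — 4 statements merged into one kernel-verified Lean document; each statement's English description precedes it below -/
import Mathlib

section
/- For class tables in which every class has arity 1 except one distinguished class Z of arity 0, the subtyping relation and the subtyping-machine execution agree: C₁C₂…C_m Z ⊑ D₁D₂…D_n Z holds if and only if the subtyping machine configuration (Z C_m … C₁ ◁ D₁ … D_n Z) admits a finite run reaching the halting configuration •. -/
/-- An inheritance rule for a unary class table: `lhs x ◁ rhs x` (if `usesVar = true`)
or `lhs x ◁ rhs Z` (if `usesVar = false`), where all class names in `rhs` are unary and
`Z` is the distinguished nullary class.  A ground type `C₁ C₂ … C_m Z` is represented by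
the word `[C₁, C₂, …, C_m]` (the trailing `Z` is implicit). -/
structure URule (C : Type*) : Type _ where
  lhs : C
  rhs : List C
  usesVar : Bool

variable {C : Type*}

/-- The inheritance relation `◁` on ground types (words over unary class names, with the
trailing `Z` implicit), induced by a unary class table: `C w ◁ rhs[x := w]`. -/
def UInh (table : Set (URule C)) (w w' : List C) : Prop :=
  ∃ r ∈ table, ∃ u : List C,
    w = r.lhs :: u ∧ w' = r.rhs ++ (if r.usesVar then u else [])

/-- `◁*`, the reflexive transitive closure of the inheritance relation. -/
def UInhStar (table : Set (URule C)) : List C → List C → Prop :=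
  Relation.ReflTransGen (UInh table)

/-- Contravariant subtyping specialized to unary class tables:
`C₁…C_m Z ⊑ Z` iff `C₁…C_m Z ◁* Z`, and
`C₁…C_m Z ⊑ D₁ D₂…D_n Z` iff `C₁…C_m Z ◁* D₁ E₂…E_p Z` for some `E₂…E_p` with
`D₂…D_n Z ⊑ E₂…E_p Z` (note the contravariant flip). -/
inductive USub (table : Set (URule C)) : List C → List C → Prop
  | nil {w : List C} : UInhStar table w [] → USub table w []
  | cons {w e ds : List C} {d : C} :
      UInhStar table w (d :: e) → USub table ds e → USub table w (d :: ds)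

/-- A configuration of the subtyping machine: `some (w, w')` represents
`Z (reverse w) ◁ w' Z` (equivalently its mirrored `▷` form), i.e. the pending query
`w Z ⊑ w' Z`; `none` is the halting configuration `•`. -/
abbrev UConfig (C : Type*) := Option (List C × List C)

/-- Execution steps of the subtyping machine:
`(Z C_m…C₁ ◁ Z) ⇝ •` if `C₁…C_m Z ◁* Z`, and
`(Z C_m…C₁ ◁ D₁…D_n Z) ⇝ (Z E_p…E₂ ▷ D₂…D_n Z)` if `C₁…C_m Z ◁* D₁ E₂…E_p Z`
(the target being the mirror of `(Z D_n…D₂ ◁ E₂…E_p Z)`). -/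
inductive UStep (table : Set (URule C)) : UConfig C → UConfig C → Prop
  | halt {w : List C} : UInhStar table w [] → UStep table (some (w, [])) none
  | move {w e ds : List C} {d : C} :
      UInhStar table w (d :: e) → UStep table (some (w, d :: ds)) (some (ds, e))

/-!
The machine is the derivation search for `⊑` run one rule at a time: the step `halt` is the
rule `USub.nil`, and the step `move` is the rule `USub.cons` with the pending premise
`D₂…D_n Z ⊑ E₂…E_p Z` as the next configuration. So a derivation unfolds into a halting run by
induction on the derivation, and a halting run folds back into a derivation by induction on
the run.
-/

variable {table : Set (URule C)}

theorem USub.reflTransGen_uStep_none {w w' : List C} (h : USub table w w') :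
    Relation.ReflTransGen (UStep table) (some (w, w')) none := by
  induction h with
  | nil hZ => exact .single (.halt hZ)
  | cons hd _ ih => exact .head (.move hd) ih

def UConfig.Holds (table : Set (URule C)) : UConfig C → Prop
  | none => True
  | some (w, w') => USub table w w'

theorem UConfig.holds_of_uStep {c c' : UConfig C} (step : UStep table c c')
    (h : UConfig.Holds table c') : UConfig.Holds table c := by
  cases step with
  | halt hZ => exact .nil hZ
  | move hd => exact .cons hd h

theorem UConfig.holds_of_reflTransGen_uStep_none {c : UConfig C}
    (run : Relation.ReflTransGen (UStep table) c none) : UConfig.Holds table c := by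
  induction run using Relation.ReflTransGen.head_induction_on with
  | refl => trivial
  | head step _ ih => exact UConfig.holds_of_uStep step ih

/-- **Subtyping agrees with the subtyping machine**: for unary class tables (all classes
of arity 1, except the distinguished nullary class `Z`),
`C₁C₂…C_m Z ⊑ D₁D₂…D_n Z` holds iff the machine configuration `(Z C_m…C₁ ◁ D₁…D_n Z)`
admits a finite run reaching the halting configuration `•`. -/
theorem usub_iff_machine_halts (table : Set (URule C)) (w w' : List C) :
    USub table w w' ↔
      Relation.ReflTransGen (UStep table) (some (w, w')) none :=
  ⟨USub.reflTransGen_uStep_none, UConfig.holds_of_reflTransGen_uStep_none⟩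
end

section
/- If a class table forbids multiple instantiation inheritance (i.e., whenever t ◁* C t₁…t_m and t ◁* C t'₁…t'_m, then t_i = t'_i for all i), then the induced subtyping machine is deterministic: from every configuration at most one execution step is enabled. -/
variable {C : Type*}

/-- **Determinism**: if the class table forbids multiple instantiation inheritance
(whenever `t ◁* C t₁` and `t ◁* C t'₁` then `t₁ = t'₁`), then the induced subtyping
machine is deterministic: from every configuration at most one step is enabled. -/
theorem machine_deterministic (table : Set (URule C))
    (hMII : ∀ (w : List C) (c : C) (u u' : List C),
      UInhStar table w (c :: u) → UInhStar table w (c :: u') → u = u')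
    (cfg cfg₁ cfg₂ : UConfig C)
    (h₁ : UStep table cfg cfg₁) (h₂ : UStep table cfg cfg₂) :
    cfg₁ = cfg₂ := by
  cases h₁ with
  | halt => cases h₂; rfl
  | move hm₁ =>
    cases h₂ with
    | move hm₂ => rw [hMII _ _ _ _ hm₁ hm₂]
end

section
/- The CYK relation correctly characterizes membership: for a context-free grammar G with start symbol S and a terminal string α, α is in the language of G if and only if cyk(α, S) holds, where cyk is the least relation with cyk(a, a) for each terminal a, and cyk(α, A) whenever A → θ₁…θ_n is a production, α = α₁…α_n, and cyk(α_k, θ_k) for all k. -/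
/-!
A CYK witness of `cyk(α, A)` is a parse tree, so it unfolds into a derivation `A ⇒* α`: apply
the production at the root, then run the derivations of the children side by side.
Conversely, read a derivation `u ⇒* α` backwards while maintaining a factorisation
`α = α₁ ⋯ α_k` with `cyk(α_i, u_i)` for each symbol `u_i` of the current sentential form `u`.
At `u = α` the factors are the single letters, and undoing a step `p A q ⇒ p θ q` merges the
factors below `θ` into one factor for `A`, which is exactly the CYK rule. At `u = [S]` the
single remaining factor is `cyk(α, S)`.
-/

/-- The CYK relation of a context-free grammar: the least relation with `cyk(a, a)` for
each terminal `a`, and `cyk(α, A)` whenever `A → θ₁…θ_n` is a production,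
`α = α₁…α_n`, and `cyk(α_k, θ_k)` for all `k`. -/
inductive Cyk {T : Type} (g : ContextFreeGrammar T) :
    List T → Symbol T g.NT → Prop
  | term (a : T) : Cyk g [a] (.terminal a)
  | prod {r : ContextFreeRule T g.NT} {αs : List (List T)} :
      r ∈ g.rules →
      List.Forall₂ (Cyk g) αs r.output →
      Cyk g αs.flatten (.nonterminal r.input)

open List

theorem List.forall₂_append_right_iff {α β : Type*} {R : α → β → Prop} {l : List α}
    {l₁ l₂ : List β} :
    Forall₂ R l (l₁ ++ l₂) ↔ ∃ k₁ k₂, l = k₁ ++ k₂ ∧ Forall₂ R k₁ l₁ ∧ Forall₂ R k₂ l₂ := by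
  constructor
  · intro h
    exact ⟨_, _, (take_append_drop l₁.length l).symm,
      forall₂_take_append l l₁ l₂ h, forall₂_drop_append l l₁ l₂ h⟩
  · rintro ⟨k₁, k₂, rfl, h₁, h₂⟩
    exact rel_append h₁ h₂

namespace ContextFreeGrammar

variable {T : Type*} {g : ContextFreeGrammar T}

theorem Derives.append {u v u' v' : List (Symbol T g.NT)} (h : g.Derives u v)
    (h' : g.Derives u' v') : g.Derives (u ++ u') (v ++ v') :=
  (h.append_right u').trans (h'.append_left v)

theorem produces_of_mem_rules {r : ContextFreeRule T g.NT} (hr : r ∈ g.rules) :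
    g.Produces [.nonterminal r.input] r.output :=
  ⟨r, hr, ContextFreeRule.Rewrites.input_output⟩

end ContextFreeGrammar

namespace Cyk

open ContextFreeGrammar

variable {T : Type} {g : ContextFreeGrammar T}

theorem derives {α : List T} {s : Symbol T g.NT} (h : Cyk g α s) :
    g.Derives [s] (α.map .terminal) := by
  refine Cyk.rec (motive_1 := fun α s _ => g.Derives [s] (α.map .terminal))
    (motive_2 := fun αs θs _ => g.Derives θs (αs.flatten.map .terminal))
    (fun _ => Derives.refl _) (fun hr _ ih => (produces_of_mem_rules hr).single.trans ih)
    (Derives.refl _) (fun _ _ hd tl => by simpa using hd.append tl) h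

theorem forall₂_singleton_terminal (α : List T) :
    Forall₂ (Cyk g) (α.map ([·])) (α.map .terminal) := by
  rw [forall₂_map_left_iff, forall₂_map_right_iff]
  exact forall₂_same.mpr fun a _ => term a

theorem exists_forall₂_of_produces {u v : List (Symbol T g.NT)} (huv : g.Produces u v)
    {αs : List (List T)} (h : Forall₂ (Cyk g) αs v) :
    ∃ αs', αs'.flatten = αs.flatten ∧ Forall₂ (Cyk g) αs' u := by
  obtain ⟨r, hr, hrw⟩ := huv
  obtain ⟨p, q, rfl, rfl⟩ := hrw.exists_parts
  obtain ⟨αp, αrq, rfl, hp, hrq⟩ :=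
    forall₂_append_right_iff.mp (by simpa only [append_assoc] using h)
  obtain ⟨αr, αq, rfl, hαr, hq⟩ := forall₂_append_right_iff.mp hrq
  exact ⟨αp ++ [αr.flatten] ++ αq, by simp,
    rel_append (rel_append hp (.cons (prod hr hαr) .nil)) hq⟩

theorem exists_forall₂_of_derives {α : List T} {u : List (Symbol T g.NT)}
    (h : g.Derives u (α.map .terminal)) :
    ∃ αs, αs.flatten = α ∧ Forall₂ (Cyk g) αs u := by
  induction h using Relation.ReflTransGen.head_induction_on with
  | refl => exact ⟨α.map ([·]), by simp [← flatMap_def], forall₂_singleton_terminal α⟩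
  | head huv _ ih =>
    obtain ⟨αs, rfl, h⟩ := ih
    exact exists_forall₂_of_produces huv h

theorem of_derives {α : List T} {s : Symbol T g.NT} (h : g.Derives [s] (α.map .terminal)) :
    Cyk g α s := by
  obtain ⟨αs, rfl, hαs⟩ := exists_forall₂_of_derives h
  obtain ⟨α, _, hα, hnil, rfl⟩ := forall₂_cons_right_iff.mp hαs
  obtain rfl := forall₂_nil_right_iff.mp hnil
  simpa using hα

theorem iff_derives {α : List T} {s : Symbol T g.NT} :
    Cyk g α s ↔ g.Derives [s] (α.map .terminal) :=
  ⟨derives, of_derives⟩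

end Cyk

/-- **Correctness of the CYK relation**: a terminal string is in the language of `G`
iff `cyk(α, S)` holds for the start symbol `S`. -/
theorem cyk_correct {T : Type} (g : ContextFreeGrammar T) (α : List T) :
    α ∈ g.language ↔ Cyk g α (.nonterminal g.initial) := by
  rw [ContextFreeGrammar.mem_language_iff, Cyk.iff_derives]
end

section
/- Each middle-of-tape rewriting step of the subtyping machine simulates a local rewriting on words: if the class table contains a rule Q x ◁ S N Q' S₂ N S₁ N x, then for all words α, β, the configuration (α Q ◁ S N β) evolves in exactly two deterministic steps to (α N S₁ N S₂ Q' ◁ β); ignoring N-padding, this rewrites Q·S into S₁·S₂·Q' with the head passing over the processed symbol. -/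
variable {C : Type*}

/-- `n`-fold composition of a step relation. -/
def StepN (R : α → α → Prop) : ℕ → α → α → Prop
  | 0 => Eq
  | n + 1 => fun a c => ∃ b, R a b ∧ StepN R n b c

theorem UInhStar.of_rule {table : Set (URule C)} {r : URule C} (hr : r ∈ table)
    (hvar : r.usesVar = true) (u : List C) :
    UInhStar table (r.lhs :: u) (r.rhs ++ u) :=
  .single ⟨r, hr, u, rfl, by simp [hvar]⟩

/-- No multiple instantiation inheritance: the arguments of an
ancestor are determined by the ancestor. -/
def NoMII (table : Set (URule C)) : Prop :=
  ∀ (w : List C) (c : C) (u u' : List C),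
    UInhStar table w (c :: u) → UInhStar table w (c :: u') → u = u'

theorem UStep.eq_of_uinhStar {table : Set (URule C)} (hMII : NoMII table)
    {w e ds : List C} {d : C} (h : UInhStar table w (d :: e)) {cfg : UConfig C}
    (hstep : UStep table (some (w, d :: ds)) cfg) : cfg = some (ds, e) := by
  cases hstep with
  | move h' => rw [hMII _ _ _ _ h h']

theorem StepN.two {R : α → α → Prop} {a b c : α} (hab : R a b) (hbc : R b c) :
    StepN R 2 a c :=
  ⟨b, hab, c, hbc, rfl⟩

theorem StepN.eq_of_two {R : α → α → Prop} {a b c x : α} (hb : ∀ y, R a y → y = b)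
    (hc : ∀ y, R b y → y = c) (h : StepN R 2 a x) : x = c := by
  obtain ⟨b', hab', x', hb'x', rfl⟩ := h
  obtain rfl := hb b' hab'
  exact hc x' hb'x'

/-- **Middle-of-tape rewriting**: if the class table contains the rule
`Q x ◁ S N Q' S₂ N S₁ N x` (and forbids multiple instantiation inheritance, so that the
machine is deterministic), then for all words `α`, `β` the configuration `(α Q ◁ S N β)`
evolves in exactly two deterministic steps to `(α N S₁ N S₂ Q' ◁ β)`: ignoring the
`N`-padding, `Q·S` is rewritten to `S₁·S₂·Q'`, the head passing over the processed
symbol. -/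
theorem middle_rewrite (table : Set (URule C)) (Q Q' S S₁ S₂ N : C)
    (hrule : (⟨Q, [S, N, Q', S₂, N, S₁, N], true⟩ : URule C) ∈ table)
    (hMII : ∀ (w : List C) (c : C) (u u' : List C),
      UInhStar table w (c :: u) → UInhStar table w (c :: u') → u = u')
    (α β : List C) :
    StepN (UStep table) 2 (some (Q :: α, S :: N :: β))
        (some ([Q', S₂, N, S₁, N] ++ α, β)) ∧
    ∀ cfg : UConfig C,
      StepN (UStep table) 2 (some (Q :: α, S :: N :: β)) cfg →
      cfg = some ([Q', S₂, N, S₁, N] ++ α, β) := by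
  have hinst : UInhStar table (Q :: α) (S :: N :: Q' :: S₂ :: N :: S₁ :: N :: α) :=
    UInhStar.of_rule hrule rfl α
  have hcancel : UInhStar table (N :: β) (N :: β) := .refl
  exact ⟨.two (.move hinst) (.move hcancel), fun _ =>
    StepN.eq_of_two (fun _ => UStep.eq_of_uinhStar hMII hinst)
      (fun _ => UStep.eq_of_uinhStar hMII hcancel)⟩
end
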